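/- Let x̂ = x̂^{(∞)} be the componentwise limit of the modified coupled recursion and let S be the shift operator [Sx]_i = x_{i−1} (with x₀ = 0). Then the directional derivative of the coupled potential at x̂ in the direction Sx̂ − x̂ vanishes: U_c'(x̂)ᵀ (Sx̂ − x̂) = 0, where U_c'(x) denotes the gradient of U_c. -/

import Mathlib

/-!
The limit `x̂` stays in the box `[0, x_max]^M`, on which `q ∘ h` is continuous, so it is a
fixed point: `x̂ = q(h(x̂))`. Differentiating `U_c` along the segment from a point `x` of the box
to another point `y` gives `U_c'(x)ᵀ(y - x) = ∑ᵢ g'(xᵢ) (yᵢ - xᵢ) (xᵢ - [h(x)]ᵢ)`: the derivative of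
`F(A g(x))` is `f(A g(x))ᵀ A g'(x)`, and moving `A` to the other side produces `h(x)`.
For `y = S x̂` every summand vanishes: below `i₀` the fixed-point equation reads `x̂ᵢ = [h(x̂)]ᵢ`,
and from `i₀` on `x̂` is constant, so `[S x̂]ᵢ = x̂ᵢ`. Where `U_c` is not differentiable at `x̂`,
`fderiv` is `0` by convention.
-/

open Set Filter

/-- The coupling matrix `A` of size `N × M` with `M = N + w − 1`. -/
noncomputable def Amat (w N : ℕ) (j : Fin N) (k : Fin (N + w - 1)) : ℝ :=
  if (j : ℕ) ≤ (k : ℕ) ∧ (k : ℕ) < (j : ℕ) + w then (w : ℝ)⁻¹ else 0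

/-- The coupled update `h(x) = Aᵀ f(A g(x))`. -/
noncomputable def coupledMap (w N : ℕ) (f g : ℝ → ℝ)
    (x : Fin (N + w - 1) → ℝ) : Fin (N + w - 1) → ℝ :=
  fun i => ∑ j : Fin N, Amat w N j i * f (∑ k, Amat w N j k * g (x k))

/-- The coupled potential `U_c(x) = g(x)ᵀx − G(x) − F(A g(x))`. -/
noncomputable def Uc (w N : ℕ) (f g : ℝ → ℝ) (x : Fin (N + w - 1) → ℝ) : ℝ :=
  (∑ i, (g (x i) * x i - ∫ z in (0:ℝ)..(x i), g z))
    - ∑ j : Fin N, ∫ z in (0:ℝ)..(∑ k, Amat w N j k * g (x k)), f z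

/-- The saturation map `q`. -/
noncomputable def qmap (M : ℕ) (x : Fin M → ℝ) : Fin M → ℝ :=
  fun i => if _h : (M + 1) / 2 ≤ (i : ℕ)
    then x ⟨(M + 1) / 2 - 1, by have := i.isLt; omega⟩ else x i

/-- The modified coupled recursion `x̂^{(ℓ+1)} = q(h(x̂^{(ℓ)}))`. -/
noncomputable def modSeq (w N : ℕ) (f g : ℝ → ℝ) (xmax : ℝ) :
    ℕ → Fin (N + w - 1) → ℝ
  | 0 => fun _ => xmax
  | ℓ + 1 => qmap _ (coupledMap w N f g (modSeq w N f g xmax ℓ))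

/-- The shift operator `S`: `[Sx]_i = x_{i−1}` with the convention `x₀ = 0`. -/
noncomputable def shiftS (M : ℕ) (x : Fin M → ℝ) : Fin M → ℝ :=
  fun i => if _h : (i : ℕ) = 0 then 0 else x ⟨(i : ℕ) - 1, by have := i.isLt; omega⟩


open Set Filter Function Topology

lemma Amat_nonneg (w N : ℕ) (j : Fin N) (k : Fin (N + w - 1)) : 0 ≤ Amat w N j k := by
  unfold Amat; split <;> positivity

lemma sum_const_inv_le_one_of_card_le {α : Type*} {s : Finset α} {w : ℕ} (h : s.card ≤ w) :
    ∑ _ ∈ s, (w : ℝ)⁻¹ ≤ 1 := by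
  rw [Finset.sum_const, nsmul_eq_mul]
  rcases Nat.eq_zero_or_pos w with rfl | hw
  · simp
  · rw [mul_inv_le_iff₀ (by positivity), one_mul]
    exact_mod_cast h

lemma Amat_row_sum_le (w N : ℕ) (j : Fin N) : ∑ k, Amat w N j k ≤ 1 := by
  simp only [Amat, ← Finset.sum_filter]
  refine sum_const_inv_le_one_of_card_le ?_
  calc _ ≤ (Finset.Ico (j : ℕ) (j + w)).card :=
        Finset.card_le_card_of_injOn Fin.val (fun k hk => by simp at hk ⊢; omega)
          Fin.val_injective.injOn
    _ = w := by simp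

lemma Amat_col_sum_le (w N : ℕ) (k : Fin (N + w - 1)) : ∑ j, Amat w N j k ≤ 1 := by
  simp only [Amat, ← Finset.sum_filter]
  refine sum_const_inv_le_one_of_card_le ?_
  calc _ ≤ (Finset.Ico ((k : ℕ) + 1 - w) (k + 1)).card :=
        Finset.card_le_card_of_injOn Fin.val (fun j hj => by simp at hj ⊢; omega)
          Fin.val_injective.injOn
    _ ≤ w := by simp; omega

lemma sum_mul_mem_Icc_of_sum_le_one {ι : Type*} [Fintype ι] {a v : ι → ℝ} {c : ℝ} (hc : 0 ≤ c)
    (ha : ∀ i, 0 ≤ a i) (ha_sum : ∑ i, a i ≤ 1) (hv : ∀ i, v i ∈ Icc 0 c) :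
    ∑ i, a i * v i ∈ Icc 0 c := by
  refine ⟨Finset.sum_nonneg fun i _ => mul_nonneg (ha i) (hv i).1, ?_⟩
  calc ∑ i, a i * v i ≤ ∑ i, a i * c :=
        Finset.sum_le_sum fun i _ => mul_le_mul_of_nonneg_left (hv i).2 (ha i)
    _ = (∑ i, a i) * c := by rw [Finset.sum_mul]
    _ ≤ c := mul_le_of_le_one_left hc ha_sum

lemma qmap_mem {M : ℕ} {s : Set ℝ} {x : Fin M → ℝ} (hx : ∀ i, x i ∈ s) (i : Fin M) :
    qmap M x i ∈ s := by
  unfold qmap; split <;> apply hx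

lemma shiftS_mem {M : ℕ} {s : Set ℝ} {x : Fin M → ℝ} (h0 : 0 ∈ s) (hx : ∀ i, x i ∈ s)
    (i : Fin M) : shiftS M x i ∈ s := by
  unfold shiftS; split
  · exact h0
  · apply hx

lemma continuous_qmap (M : ℕ) : Continuous (qmap M) :=
  continuous_pi fun i => by unfold qmap; split <;> exact continuous_apply _

lemma qmap_apply_of_pred_le {M : ℕ} (y : Fin M → ℝ) {i : Fin M} (hi : (M + 1) / 2 - 1 ≤ i) :
    qmap M y i = y ⟨(M + 1) / 2 - 1, by have := i.isLt; omega⟩ := by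
  unfold qmap
  split
  · rfl
  · congr 1; ext; simp only; omega

lemma shiftS_apply_eq_or_eq_of_eq_qmap {M : ℕ} {x y : Fin M → ℝ} (hx : x = qmap M y)
    (i : Fin M) : shiftS M x i = x i ∨ y i = x i := by
  have := i.isLt
  by_cases hi : (M + 1) / 2 ≤ (i : ℕ)
  · left
    have hi0 : (i : ℕ) ≠ 0 := by omega
    simp only [shiftS, dif_neg hi0, hx]
    rw [qmap_apply_of_pred_le y (by simp only; omega), qmap_apply_of_pred_le y (by omega)]
  · right
    simp [hx, qmap, hi]

theorem isFixedPt_of_tendsto_of_continuousWithinAt {X : Type*} [TopologicalSpace X]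
    [T2Space X] {T : X → X} {S : Set X} {u : ℕ → X} {x : X} (hT : ContinuousWithinAt T S x)
    (hu : ∀ n, u n ∈ S) (hstep : ∀ n, u (n + 1) = T (u n)) (hlim : Tendsto u atTop (𝓝 x)) :
    IsFixedPt T x := by
  have hTu : Tendsto (T ∘ u) atTop (𝓝 (T x)) :=
    hT.tendsto.comp (tendsto_nhdsWithin_iff.2 ⟨hlim, Eventually.of_forall hu⟩)
  refine tendsto_nhds_unique hTu ?_
  simpa only [comp_def, ← hstep] using (tendsto_add_atTop_iff_nat 1).2 hlim

lemma hasDerivWithinAt_integral_Icc {φ : ℝ → ℝ} {a b x : ℝ} (hφ : ContinuousOn φ (Icc a b))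
    (hx : x ∈ Icc a b) :
    HasDerivWithinAt (fun u => ∫ z in a..u, φ z) (φ x) (Icc a b) x := by
  have hab : a ≤ b := hx.1.trans hx.2
  set ψ : ℝ → ℝ := fun z => φ (projIcc a b hab z)
  have hψ : Continuous ψ :=
    hφ.comp_continuous (continuous_subtype_val.comp continuous_projIcc) fun z => Subtype.mem _
  have hψφ : EqOn ψ φ (Icc a b) := fun z hz => by simp [ψ, projIcc_of_mem hab hz]
  have hint : ∀ u ∈ Icc a b, ∫ z in a..u, φ z = ∫ z in a..u, ψ z := fun u hu =>
    intervalIntegral.integral_congr fun z hz => by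
      rw [uIcc_of_le hu.1] at hz
      exact (hψφ ⟨hz.1, hz.2.trans hu.2⟩).symm
  have hderiv := (hψ.integral_hasStrictDerivAt a x).hasDerivAt.hasDerivWithinAt (s := Icc a b)
  rw [hψφ hx] at hderiv
  exact hderiv.congr hint (hint x hx)

lemma sum_mul_sum_Amat_eq_sum_coupledMap_mul (w N : ℕ) (f g : ℝ → ℝ)
    (x a : Fin (N + w - 1) → ℝ) :
    ∑ j, f (∑ k, Amat w N j k * g (x k)) * ∑ k, Amat w N j k * a k
      = ∑ k, coupledMap w N f g x k * a k := by
  simp only [coupledMap, Finset.mul_sum, Finset.sum_mul]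
  rw [Finset.sum_comm]
  exact Finset.sum_congr rfl fun _ _ => Finset.sum_congr rfl fun _ _ => by ring

section

variable {xmax ymax : ℝ} {f g : ℝ → ℝ} {w N : ℕ}

lemma Amat_sum_mem_Icc (hymax : 0 ≤ ymax) (hg : MapsTo g (Icc 0 xmax) (Icc 0 ymax))
    {x : Fin (N + w - 1) → ℝ} (hx : ∀ k, x k ∈ Icc 0 xmax) (j : Fin N) :
    ∑ k, Amat w N j k * g (x k) ∈ Icc 0 ymax :=
  sum_mul_mem_Icc_of_sum_le_one hymax (Amat_nonneg w N j) (Amat_row_sum_le w N j)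
    fun k => hg (hx k)

lemma coupledMap_mem_Icc (hxmax : 0 ≤ xmax) (hymax : 0 ≤ ymax)
    (hf : MapsTo f (Icc 0 ymax) (Icc 0 xmax)) (hg : MapsTo g (Icc 0 xmax) (Icc 0 ymax))
    {x : Fin (N + w - 1) → ℝ} (hx : ∀ k, x k ∈ Icc 0 xmax) (i : Fin (N + w - 1)) :
    coupledMap w N f g x i ∈ Icc 0 xmax :=
  sum_mul_mem_Icc_of_sum_le_one hxmax (fun j => Amat_nonneg w N j i) (Amat_col_sum_le w N i)
    fun j => hf (Amat_sum_mem_Icc hymax hg hx j)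

lemma modSeq_mem_Icc (hxmax : 0 ≤ xmax) (hymax : 0 ≤ ymax)
    (hf : MapsTo f (Icc 0 ymax) (Icc 0 xmax)) (hg : MapsTo g (Icc 0 xmax) (Icc 0 ymax))
    (ℓ : ℕ) (i : Fin (N + w - 1)) : modSeq w N f g xmax ℓ i ∈ Icc 0 xmax := by
  induction ℓ generalizing i with
  | zero => exact ⟨hxmax, le_rfl⟩
  | succ ℓ ih => exact qmap_mem (coupledMap_mem_Icc hxmax hymax hf hg ih) i

lemma continuousOn_coupledMap (hymax : 0 ≤ ymax) (hf : ContinuousOn f (Icc 0 ymax))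
    (hg : ContinuousOn g (Icc 0 xmax)) (hg_maps : MapsTo g (Icc 0 xmax) (Icc 0 ymax)) :
    ContinuousOn (coupledMap w N f g) (univ.pi fun _ => Icc 0 xmax) := by
  have hgk : ∀ k, ContinuousOn (fun x : Fin (N + w - 1) → ℝ => g (x k))
      (univ.pi fun _ => Icc 0 xmax) := fun k =>
    hg.comp (continuous_apply k).continuousOn fun x hx => hx k (mem_univ k)
  refine continuousOn_pi.2 fun i => continuousOn_finsetSum _ fun j _ =>
    continuousOn_const.mul (hf.comp (continuousOn_finsetSum _ fun k _ =>
      continuousOn_const.mul (hgk k)) fun x hx => ?_)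
  exact Amat_sum_mem_Icc hymax hg_maps (fun k => hx k (mem_univ k)) j

theorem hasDerivWithinAt_Uc_segment (hymax : 0 ≤ ymax) (hf : ContinuousOn f (Icc 0 ymax))
    (hg : DifferentiableOn ℝ g (Icc 0 xmax)) (hg_maps : MapsTo g (Icc 0 xmax) (Icc 0 ymax))
    {x y : Fin (N + w - 1) → ℝ} (hx : ∀ i, x i ∈ Icc 0 xmax) (hy : ∀ i, y i ∈ Icc 0 xmax) :
    HasDerivWithinAt (fun t : ℝ => Uc w N f g (x + t • (y - x)))
      (∑ i, derivWithin g (Icc 0 xmax) (x i) * (y i - x i) * (x i - coupledMap w N f g x i))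
      (Icc 0 1) 0 := by
  set g' := derivWithin g (Icc 0 xmax)
  set d := y - x
  have h0 : (0 : ℝ) ∈ Icc 0 1 := ⟨le_rfl, zero_le_one⟩
  have hc : ∀ i, MapsTo (fun t : ℝ => x i + t * d i) (Icc 0 1) (Icc 0 xmax) := fun i t ht =>
    (convex_Icc 0 xmax).add_smul_mem (hx i) (by simpa [d] using hy i) ht
  have hc' : ∀ i, HasDerivWithinAt (fun t : ℝ => x i + t * d i) (d i) (Icc 0 1) 0 := fun i =>
    by simpa using (((hasDerivAt_id (0 : ℝ)).mul_const (d i)).const_add (x i)).hasDerivWithinAt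
  have hgc : ∀ i, HasDerivWithinAt (fun t : ℝ => g (x i + t * d i)) (g' (x i) * d i)
      (Icc 0 1) 0 := fun i =>
    ((hg (x i) (hx i)).hasDerivWithinAt).comp_of_eq 0 (hc' i) (hc i) (by simp)
  set Y : Fin N → ℝ → ℝ := fun j t => ∑ k, Amat w N j k * g (x k + t * d k)
  have hY_maps : ∀ j, MapsTo (Y j) (Icc 0 1) (Icc 0 ymax) := fun j t ht =>
    Amat_sum_mem_Icc hymax hg_maps (fun k => hc k ht) j
  have hF : ∀ j, HasDerivWithinAt (fun t => ∫ z in (0 : ℝ)..Y j t, f z)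
      (f (Y j 0) * ∑ k, Amat w N j k * (g' (x k) * d k)) (Icc 0 1) 0 := fun j =>
    (hasDerivWithinAt_integral_Icc hf (hY_maps j h0)).comp 0
      (HasDerivWithinAt.fun_sum fun k _ => (hgc k).const_mul _) (hY_maps j)
  have hG : ∀ i, HasDerivWithinAt (fun t => ∫ z in (0 : ℝ)..x i + t * d i, g z)
      (g (x i) * d i) (Icc 0 1) 0 := fun i =>
    (hasDerivWithinAt_integral_Icc hg.continuousOn (hx i)).comp_of_eq 0 (hc' i) (hc i) (by simp)
  have hU := (HasDerivWithinAt.fun_sum (u := Finset.univ) fun i _ =>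
    ((hgc i).fun_mul (hc' i)).fun_sub (hG i)).fun_sub
      (HasDerivWithinAt.fun_sum (u := Finset.univ) fun j _ => hF j)
  refine (hU.congr_of_mem (fun t _ => ?_) h0).congr_deriv ?_
  · simp only [Uc, Y, Pi.add_apply, Pi.smul_apply, smul_eq_mul]
  · simp only [Y, d, Pi.sub_apply, zero_mul, add_zero, sum_mul_sum_Amat_eq_sum_coupledMap_mul,
      ← Finset.sum_sub_distrib]
    exact Finset.sum_congr rfl fun i _ => by ring

theorem fderiv_Uc_apply_sub (hymax : 0 ≤ ymax) (hf : ContinuousOn f (Icc 0 ymax))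
    (hg : DifferentiableOn ℝ g (Icc 0 xmax)) (hg_maps : MapsTo g (Icc 0 xmax) (Icc 0 ymax))
    {x y : Fin (N + w - 1) → ℝ} (hx : ∀ i, x i ∈ Icc 0 xmax) (hy : ∀ i, y i ∈ Icc 0 xmax)
    (hdiff : DifferentiableAt ℝ (Uc w N f g) x) :
    fderiv ℝ (Uc w N f g) x (y - x)
      = ∑ i, derivWithin g (Icc 0 xmax) (x i) * (y i - x i) * (x i - coupledMap w N f g x i) := by
  have hline : HasDerivAt (fun t : ℝ => x + t • (y - x)) (y - x) 0 := by
    simpa using ((hasDerivAt_id (0 : ℝ)).smul_const (y - x)).const_add x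
  exact (uniqueDiffOn_Icc_zero_one 0 ⟨le_rfl, zero_le_one⟩).eq_deriv _
    (hdiff.hasFDerivAt.comp_hasDerivAt_of_eq 0 hline (by simp)).hasDerivWithinAt
    (hasDerivWithinAt_Uc_segment hymax hf hg hg_maps hx hy)

end

theorem stmt_10_general
    (xmax ymax : ℝ) (hxmax : 0 < xmax) (hymax : 0 < ymax)
    (f g : ℝ → ℝ)
    (hf_maps : Set.MapsTo f (Set.Icc 0 ymax) (Set.Icc 0 xmax))
    (hf_C1 : ContDiffOn ℝ 1 f (Set.Icc 0 ymax))
    (hg_maps : Set.MapsTo g (Set.Icc 0 xmax) (Set.Icc 0 ymax))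
    (hg_C2 : ContDiffOn ℝ 2 g (Set.Icc 0 xmax))
    (w N : ℕ)
    (xhat : Fin (N + w - 1) → ℝ)
    (hlim : ∀ i, Tendsto (fun ℓ => modSeq w N f g xmax ℓ i) atTop (nhds (xhat i))) :
    fderiv ℝ (Uc w N f g) xhat (shiftS _ xhat - xhat) = 0 := by
  set box : Set (Fin (N + w - 1) → ℝ) := univ.pi fun _ => Icc 0 xmax
  have hseq : ∀ ℓ, modSeq w N f g xmax ℓ ∈ box := fun ℓ i _ =>
    modSeq_mem_Icc hxmax.le hymax.le hf_maps hg_maps ℓ i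
  have hxhat : xhat ∈ box :=
    (isClosed_set_pi fun _ _ => isClosed_Icc).mem_of_tendsto (tendsto_pi_nhds.2 hlim)
      (Eventually.of_forall hseq)
  have hfix : IsFixedPt (qmap _ ∘ coupledMap w N f g) xhat :=
    isFixedPt_of_tendsto_of_continuousWithinAt
      ((continuous_qmap _).comp_continuousOn (continuousOn_coupledMap hymax.le
        hf_C1.continuousOn hg_C2.continuousOn hg_maps) xhat hxhat)
      hseq (fun _ => rfl) (tendsto_pi_nhds.2 hlim)
  have hxhat' : ∀ i, xhat i ∈ Icc 0 xmax := fun i => hxhat i (mem_univ i)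
  by_cases hdiff : DifferentiableAt ℝ (Uc w N f g) xhat
  · rw [fderiv_Uc_apply_sub hymax.le hf_C1.continuousOn (hg_C2.differentiableOn two_ne_zero)
      hg_maps hxhat' (shiftS_mem ⟨le_rfl, hxmax.le⟩ hxhat') hdiff]
    refine Finset.sum_eq_zero fun i _ => ?_
    rcases shiftS_apply_eq_or_eq_of_eq_qmap hfix.symm i with h | h <;> simp [h]
  · simp [fderiv_zero_of_not_differentiableAt hdiff]

/-- **Lemma (modified_scalar_fp_dir_deriv).** Let `x̂ = x̂^{(∞)}` be the limit of the
modified coupled recursion.  Then the directional derivative of the coupled potential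
at `x̂` in the direction `Sx̂ − x̂` vanishes: `U_c'(x̂)ᵀ(Sx̂ − x̂) = 0`. -/
theorem stmt_10
    (xmax ymax : ℝ) (hxmax : 0 < xmax) (hymax : 0 < ymax)
    (f g : ℝ → ℝ)
    (hf_maps : Set.MapsTo f (Set.Icc 0 ymax) (Set.Icc 0 xmax))
    (hf_mono : MonotoneOn f (Set.Icc 0 ymax))
    (hf_C1 : ContDiffOn ℝ 1 f (Set.Icc 0 ymax))
    (hg_maps : Set.MapsTo g (Set.Icc 0 xmax) (Set.Icc 0 ymax))
    (hg_strict : StrictMonoOn g (Set.Icc 0 xmax))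
    (hg_C2 : ContDiffOn ℝ 2 g (Set.Icc 0 xmax))
    (hg_top : g xmax = ymax)
    (w N : ℕ) (hw : 1 ≤ w) (hN : 1 ≤ N)
    (xhat : Fin (N + w - 1) → ℝ)
    (hlim : ∀ i, Tendsto (fun ℓ => modSeq w N f g xmax ℓ i) atTop (nhds (xhat i))) :
    fderiv ℝ (Uc w N f g) xhat (shiftS _ xhat - xhat) = 0 :=
  stmt_10_general xmax ymax hxmax hymax f g hf_maps hf_C1 hg_maps hg_C2 w N xhat hlim
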